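/- arXiv:2209.14381 — 6 statements merged into one kernel-verified Lean document; each statement's English description precedes it below -/
import Mathlib

section
/- Let E be a Riesz space and let p, q : ℕ → ℕ satisfy the deferred property. Suppose z_n ↓^{D_{st_o}}_{p,q} 0. Then for every infinite set M ⊆ ℕ with δ_{p,q}(M) = 1 such that the subsequence (z_m)_{m∈M} is decreasing, one has inf_{m∈M} z_m = 0; in particular (z_n) is deferred statistical order decreasing to 0 along the index set M. -/
open Filter Topology

variable {E : Type*} [AddCommGroup E] [Lattice E]
  [CovariantClass E E (· + ·) (· ≤ ·)] [Module ℝ E] [PosSMulMono ℝ E]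

/-- `p` and `q` satisfy the deferred property: `p n < q n` for all `n` and `q n → ∞`. -/
def DeferredProperty (p q : ℕ → ℕ) : Prop :=
  (∀ n, p n < q n) ∧ Tendsto q atTop atTop

open Classical in
/-- The ratio `|{k ∈ K : p n < k ≤ q n}| / (q n - p n)`. -/
noncomputable def deferredRatio (p q : ℕ → ℕ) (K : Set ℕ) (n : ℕ) : ℝ :=
  (((Finset.Ioc (p n) (q n)).filter (fun k => k ∈ K)).card : ℝ) / ((q n : ℝ) - (p n : ℝ))

/-- The deferred density of `K ⊆ ℕ` is `a`. -/
def DeferredDensity (p q : ℕ → ℕ) (K : Set ℕ) (a : ℝ) : Prop :=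
  Tendsto (deferredRatio p q K) atTop (nhds a)

/-- `z` is deferred statistical order decreasing to `0`: there is an (infinite) set
`K = {k₁ < k₂ < ⋯}` of deferred density one along which `z` is decreasing with infimum `0`. -/
def DStatDecreasing (p q : ℕ → ℕ) (z : ℕ → E) : Prop :=
  ∃ K : Set ℕ, K.Infinite ∧ DeferredDensity p q K 1 ∧
    (∀ i ∈ K, ∀ j ∈ K, i ≤ j → z j ≤ z i) ∧ IsGLB (z '' K) 0

/-- `x` is deferred statistical order convergent to `l`. -/
def DStatOrderConv (p q : ℕ → ℕ) (x : ℕ → E) (l : E) : Prop :=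
  ∃ z : ℕ → E, DStatDecreasing p q z ∧
    ∃ K : Set ℕ, K.Infinite ∧ DeferredDensity p q K 1 ∧ ∀ k ∈ K, |x k - l| ≤ z k

/-! Two sets of deferred density one meet in a set of deferred density one (inclusion–exclusion
in each window `(p n, q n]`), and as `q n → ∞` a set of positive deferred density is unbounded.
Hence the index sets `K` and `M` share arbitrarily large elements, so the values of `z` on `K` and
on `M`, decreasing along both sets, bound each other from below and have the same infimum. -/

section DeferredRatio

open Classical

variable {p q : ℕ → ℕ} {K M : Set ℕ} {n : ℕ}

lemma deferredRatio_of_le (h : q n ≤ p n) : deferredRatio p q K n = 0 := by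
  simp [deferredRatio, Finset.Ioc_eq_empty_of_le h]

lemma deferredRatio_nonneg : 0 ≤ deferredRatio p q K n := by
  rcases le_or_gt (q n) (p n) with h | h
  · exact (deferredRatio_of_le h).ge
  · exact div_nonneg (Nat.cast_nonneg _) (sub_nonneg.2 (by exact_mod_cast h.le))

lemma deferredRatio_le_one : deferredRatio p q K n ≤ 1 := by
  rcases le_or_gt (q n) (p n) with h | h
  · exact (deferredRatio_of_le h).trans_le zero_le_one
  refine (div_le_one (sub_pos.2 (by exact_mod_cast h))).2 ?_
  calc _ ≤ ((Finset.Ioc (p n) (q n)).card : ℝ) := Nat.cast_le.2 (Finset.card_filter_le _ _)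
    _ = _ := by rw [Nat.card_Ioc, Nat.cast_sub h.le]

lemma deferredRatio_add_le :
    deferredRatio p q K n + deferredRatio p q M n ≤ 1 + deferredRatio p q (K ∩ M) n := by
  rcases le_or_gt (q n) (p n) with h | h
  · simp [deferredRatio_of_le h]
  have hcard : ((Finset.Ioc (p n) (q n)).filter (· ∈ K)).card
      + ((Finset.Ioc (p n) (q n)).filter (· ∈ M)).card
      ≤ (Finset.Ioc (p n) (q n)).card
        + ((Finset.Ioc (p n) (q n)).filter (· ∈ K ∩ M)).card := by
    rw [← Finset.card_union_add_card_inter, ← Finset.filter_or, ← Finset.filter_and]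
    exact Nat.add_le_add_right (Finset.card_filter_le _ _) _
  have hd : (0 : ℝ) < q n - p n := sub_pos.2 (by exact_mod_cast h)
  have hI : ((Finset.Ioc (p n) (q n)).card : ℝ) = q n - p n := by
    rw [Nat.card_Ioc, Nat.cast_sub h.le]
  rw [deferredRatio, deferredRatio, deferredRatio, ← add_div, one_add_div hd.ne',
    div_le_div_iff_of_pos_right hd, ← hI]
  norm_cast
  convert hcard -- the two sides use different `Decidable` instances for the filters

lemma deferredRatio_le_of_subset_Iic {N : ℕ} (hK : K ⊆ Set.Iic N) (hN : N ≤ q n) :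
    deferredRatio p q K n ≤ N / q n := by
  have hS : (Finset.Ioc (p n) (q n)).filter (· ∈ K) ⊆ Finset.Ioc (p n) N := fun k hk => by
    rw [Finset.mem_filter, Finset.mem_Ioc] at hk
    exact Finset.mem_Ioc.2 ⟨hk.1.1, hK hk.2⟩
  rcases le_or_gt N (p n) with h | h
  · rw [deferredRatio, Finset.subset_empty.1 (hS.trans (Finset.Ioc_eq_empty_of_le h).le)]
    simp only [Finset.card_empty, Nat.cast_zero, zero_div]
    positivity
  · have hcard : (((Finset.Ioc (p n) (q n)).filter (· ∈ K)).card : ℝ) ≤ N - p n := by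
      have := Finset.card_le_card hS
      rw [Nat.card_Ioc] at this
      exact_mod_cast (Nat.cast_le.2 this).trans_eq (Nat.cast_sub h.le)
    have hlt : (p n : ℝ) < q n := by exact_mod_cast h.trans_le hN
    have hN' : (N : ℝ) ≤ q n := by exact_mod_cast hN
    calc deferredRatio p q K n ≤ (N - p n) / (q n - p n) := by
          unfold deferredRatio; gcongr
      _ ≤ N / q n := by
          rw [div_le_div_iff₀ (by linarith) (by linarith)]
          nlinarith [(Nat.cast_nonneg (p n) : (0:ℝ) ≤ p n)]

end DeferredRatio

namespace DeferredDensity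

variable {p q : ℕ → ℕ} {K M : Set ℕ}

theorem inter (hK : DeferredDensity p q K 1) (hM : DeferredDensity p q M 1) :
    DeferredDensity p q (K ∩ M) 1 := by
  have hlow : Tendsto (fun n => deferredRatio p q K n + deferredRatio p q M n - 1) atTop
      (𝓝 1) := by
    simpa using (hK.add hM).sub_const 1
  refine tendsto_of_tendsto_of_tendsto_of_le_of_le hlow tendsto_const_nhds (fun n => ?_)
    (fun n => deferredRatio_le_one)
  linarith [@deferredRatio_add_le p q K M n]

theorem not_bddAbove {a : ℝ} (hq : Tendsto q atTop atTop) (hK : DeferredDensity p q K a)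
    (ha : a ≠ 0) : ¬BddAbove K := by
  rintro ⟨N, hN⟩
  have hzero : Tendsto (fun n => (N : ℝ) / q n) atTop (𝓝 0) :=
    tendsto_const_nhds.div_atTop (tendsto_natCast_atTop_atTop.comp hq)
  refine ha (tendsto_nhds_unique hK (tendsto_of_tendsto_of_tendsto_of_le_of_le'
    tendsto_const_nhds hzero (Eventually.of_forall fun n => deferredRatio_nonneg) ?_))
  filter_upwards [hq.eventually_ge_atTop N] with n hn
  exact deferredRatio_le_of_subset_Iic hN hn

end DeferredDensity

theorem isGLB_image_of_antitoneOn {ι α : Type*} [LinearOrder ι] [Preorder α] {z : ι → α}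
    {K M : Set ι} {a : α} (hK : AntitoneOn z K) (hM : AntitoneOn z M)
    (hKM : ¬BddAbove (K ∩ M)) (ha : IsGLB (z '' K) a) : IsGLB (z '' M) a := by
  rw [not_bddAbove_iff] at hKM
  constructor
  · rintro _ ⟨m, hm, rfl⟩
    obtain ⟨k, ⟨hkK, hkM⟩, hmk⟩ := hKM m
    exact (ha.1 ⟨k, hkK, rfl⟩).trans (hM hm hkM hmk.le)
  · intro b hb
    refine ha.2 ?_
    rintro _ ⟨k, hk, rfl⟩
    obtain ⟨m, ⟨hmK, hmM⟩, hkm⟩ := hKM k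
    exact (hb ⟨m, hmM, rfl⟩).trans (hK hk hmK hkm.le)

theorem stmt0_general (p q : ℕ → ℕ) (hpq : DeferredProperty p q) (z : ℕ → E)
    (hz : DStatDecreasing p q z) (M : Set ℕ)
    (hMd : DeferredDensity p q M 1)
    (hMdec : ∀ i ∈ M, ∀ j ∈ M, i ≤ j → z j ≤ z i) :
    IsGLB (z '' M) 0 := by
  obtain ⟨K, -, hKd, hKdec, hKglb⟩ := hz
  exact isGLB_image_of_antitoneOn hKdec hMdec
    ((hKd.inter hMd).not_bddAbove hpq.2 one_ne_zero) hKglb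

theorem stmt0 (p q : ℕ → ℕ) (hpq : DeferredProperty p q) (z : ℕ → E)
    (hz : DStatDecreasing p q z) (M : Set ℕ) (hM : M.Infinite)
    (hMd : DeferredDensity p q M 1)
    (hMdec : ∀ i ∈ M, ∀ j ∈ M, i ≤ j → z j ≤ z i) :
    IsGLB (z '' M) 0 :=
  stmt0_general p q hpq z hz M hMd hMdec
end

section
/- Let E be a Riesz space and let p, q : ℕ → ℕ satisfy the deferred property. If x_n →^{D_{st_o}}_{p,q} x and y_n →^{D_{st_o}}_{p,q} y in E, then (x_n ∧ y_n) →^{D_{st_o}}_{p,q} (x ∧ y). -/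
open Filter Topology

variable {E : Type*} [AddCommGroup E] [Lattice E]
  [CovariantClass E E (· + ·) (· ≤ ·)] [Module ℝ E] [PosSMulMono ℝ E]

/-!
Along the intersection of the index sets of the two dominating sequences `z` and `w`, both are
decreasing and so `z + w` is decreasing with infimum `0`; and `|x ⊓ y - a ⊓ b| ≤ |x - a| + |y - b|`
bounds the meets by `z + w` on the intersection of the two sets where the bounds hold. It remains
to see that deferred density one is stable under finite intersections (inclusion–exclusion on each
window `(p n, q n]`) and forces the set to be infinite (a set bounded by `M` fills at most half of a
window once `q n ≥ 2M`).
-/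

open Finset in
lemma Finset.card_filter_add_card_filter_le {α : Type*} (s : Finset α) (P Q : α → Prop)
    [DecidablePred P] [DecidablePred Q] :
    #{a ∈ s | P a} + #{a ∈ s | Q a} ≤ #{a ∈ s | P a ∧ Q a} + #s := by
  classical
  rw [filter_and, ← card_union_add_card_inter, add_comm]
  gcongr
  exact union_subset (filter_subset _ _) (filter_subset _ _)

section DeferredDensity

variable {p q : ℕ → ℕ} {n : ℕ}

open Classical Finset in
lemma deferredRatio_eq (K : Set ℕ) (h : p n ≤ q n) :
    deferredRatio p q K n = #{k ∈ Ioc (p n) (q n) | k ∈ K} / #(Ioc (p n) (q n)) := by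
  rw [deferredRatio, Nat.card_Ioc, Nat.cast_sub h]

open Classical Finset in
lemma deferredRatio_mono (h : p n ≤ q n) {K₁ K₂ : Set ℕ} (hK : K₁ ⊆ K₂) :
    deferredRatio p q K₁ n ≤ deferredRatio p q K₂ n := by
  rw [deferredRatio_eq K₁ h, deferredRatio_eq K₂ h]
  gcongr

open Classical Finset in
lemma deferredRatio_add_deferredRatio_sub_one_le (h : p n < q n) (K₁ K₂ : Set ℕ) :
    deferredRatio p q K₁ n + deferredRatio p q K₂ n - 1 ≤ deferredRatio p q (K₁ ∩ K₂) n := by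
  have hpos : (0 : ℝ) < #(Ioc (p n) (q n)) := by simpa using h
  rw [deferredRatio_eq K₁ h.le, deferredRatio_eq K₂ h.le, deferredRatio_eq _ h.le,
    ← add_div, sub_le_iff_le_add, div_le_iff₀ hpos, add_mul, one_mul, div_mul_cancel₀ _ hpos.ne']
  norm_cast
  convert card_filter_add_card_filter_le _ (· ∈ K₁) (· ∈ K₂) using 4
  exact Iff.rfl

open Classical Finset in
lemma deferredRatio_le_half_of_bddAbove (h : p n < q n) {K : Set ℕ} {M : ℕ}
    (hK : M ∈ upperBounds K) (hM : 2 * M ≤ q n) : deferredRatio p q K n ≤ 1 / 2 := by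
  have hsub : {k ∈ Ioc (p n) (q n) | k ∈ K} ⊆ Ioc (p n) M := by
    intro k hk
    rw [mem_filter, mem_Ioc] at hk
    exact mem_Ioc.2 ⟨hk.1.1, hK hk.2⟩
  have hcard : 2 * #{k ∈ Ioc (p n) (q n) | k ∈ K} ≤ #(Ioc (p n) (q n)) := by
    have := card_le_card hsub
    rw [Nat.card_Ioc] at this ⊢
    omega
  have hpos : (0 : ℝ) < #(Ioc (p n) (q n)) := by simpa using h
  rw [deferredRatio_eq _ h.le, div_le_iff₀ hpos]
  have hcard' : (2 : ℝ) * #{k ∈ Ioc (p n) (q n) | k ∈ K} ≤ #(Ioc (p n) (q n)) := by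
    exact_mod_cast hcard
  linarith

lemma DeferredDensity.inter_s8 (hpq : ∀ n, p n < q n) {K₁ K₂ : Set ℕ}
    (h₁ : DeferredDensity p q K₁ 1) (h₂ : DeferredDensity p q K₂ 1) :
    DeferredDensity p q (K₁ ∩ K₂) 1 := by
  have hlow : Tendsto (fun n => deferredRatio p q K₁ n + deferredRatio p q K₂ n - 1)
      atTop (𝓝 1) := by
    simpa using (h₁.add h₂).sub_const 1
  exact tendsto_of_tendsto_of_tendsto_of_le_of_le hlow h₁
    (fun n => deferredRatio_add_deferredRatio_sub_one_le (hpq n) K₁ K₂)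
    (fun n => deferredRatio_mono (hpq n).le Set.inter_subset_left)

lemma DeferredDensity.infinite (hpq : DeferredProperty p q) {K : Set ℕ}
    (hK : DeferredDensity p q K 1) : K.Infinite := by
  intro hfin
  obtain ⟨M, hM⟩ := hfin.bddAbove
  have hlarge : ∀ᶠ n in atTop, 1 / 2 < deferredRatio p q K n :=
    hK.eventually (eventually_gt_nhds (by norm_num))
  obtain ⟨n, hn, hqn⟩ := (hlarge.and (hpq.2.eventually_ge_atTop (2 * M))).exists
  linarith [deferredRatio_le_half_of_bddAbove (hpq.1 n) hM hqn]

end DeferredDensity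

section OrderedGroup

variable {α : Type*}

lemma IsGLB.image_of_antitoneOn_of_subset [Preorder α] {z : ℕ → α} {K K' : Set ℕ} {a : α}
    (hz : AntitoneOn z K) (hglb : IsGLB (z '' K) a) (hK' : K' ⊆ K) (hinf : K'.Infinite) :
    IsGLB (z '' K') a := by
  refine ⟨fun _ hc => hglb.1 (Set.image_mono hK' hc), fun c hc => hglb.2 ?_⟩
  rintro _ ⟨j, hj, rfl⟩
  obtain ⟨m, hm, hjm⟩ := hinf.exists_gt j
  exact (hc ⟨m, hm, rfl⟩).trans (hz hj (hK' hm) hjm.le)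

lemma IsGLB.image_add_of_antitoneOn [AddCommGroup α] [PartialOrder α] [AddLeftMono α]
    {ι : Type*} [LinearOrder ι] {z w : ι → α} {K : Set ι} {a b : α}
    (hz : AntitoneOn z K) (hw : AntitoneOn w K)
    (ha : IsGLB (z '' K) a) (hb : IsGLB (w '' K) b) :
    IsGLB ((fun k => z k + w k) '' K) (a + b) := by
  refine ⟨?_, fun c hc => ?_⟩
  · rintro _ ⟨k, hk, rfl⟩
    exact add_le_add (ha.1 ⟨k, hk, rfl⟩) (hb.1 ⟨k, hk, rfl⟩)
  -- For `k, j ∈ K`, comparing with the index `max k j` gives `c ≤ z j + w k`.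
  have hcross : ∀ k ∈ K, ∀ j ∈ K, c ≤ z j + w k := by
    intro k hk j hj
    rcases le_total k j with hkj | hjk
    · exact (hc ⟨j, hj, rfl⟩).trans (add_le_add_right (hw hk hj hkj) _)
    · exact (hc ⟨k, hk, rfl⟩).trans (add_le_add_left (hz hj hk hjk) _)
  have hcb : c - a ≤ b := hb.2 <| by
    rintro _ ⟨k, hk, rfl⟩
    refine sub_le_comm.1 (ha.2 ?_)
    rintro _ ⟨j, hj, rfl⟩
    exact sub_le_iff_le_add.2 (hcross k hk j hj)
  exact sub_le_iff_le_add'.1 hcb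

lemma abs_inf_sub_inf_le_abs_add_abs [Lattice α] [AddCommGroup α] [AddLeftMono α]
    (x y a b : α) : |x ⊓ y - a ⊓ b| ≤ |x - a| + |y - b| :=
  calc |x ⊓ y - a ⊓ b| = |(x ⊓ y - a ⊓ y) + (y ⊓ a - b ⊓ a)| := by
        rw [inf_comm y a, inf_comm b a]; abel_nf
    _ ≤ |x ⊓ y - a ⊓ y| + |y ⊓ a - b ⊓ a| := abs_add_le _ _
    _ ≤ |x - a| + |y - b| :=
        add_le_add (abs_inf_sub_inf_le_abs _ _ _) (abs_inf_sub_inf_le_abs _ _ _)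

end OrderedGroup

lemma DStatDecreasing.add {F : Type*} [AddCommGroup F] [Lattice F] [AddLeftMono F]
    {p q : ℕ → ℕ} (hpq : DeferredProperty p q) {z w : ℕ → F}
    (hz : DStatDecreasing p q z) (hw : DStatDecreasing p q w) :
    DStatDecreasing p q (z + w) := by
  obtain ⟨Kz, -, hKz, hz_anti, hz_glb⟩ := hz
  obtain ⟨Kw, -, hKw, hw_anti, hw_glb⟩ := hw
  have hK := hKz.inter_s8 hpq.1 hKw
  have hinf := hK.infinite hpq
  have hz' : AntitoneOn z (Kz ∩ Kw) := AntitoneOn.mono hz_anti Set.inter_subset_left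
  have hw' : AntitoneOn w (Kz ∩ Kw) := AntitoneOn.mono hw_anti Set.inter_subset_right
  refine ⟨Kz ∩ Kw, hinf, hK, hz'.add hw', ?_⟩
  simpa using IsGLB.image_add_of_antitoneOn hz' hw'
    (hz_glb.image_of_antitoneOn_of_subset hz_anti Set.inter_subset_left hinf)
    (hw_glb.image_of_antitoneOn_of_subset hw_anti Set.inter_subset_right hinf)

theorem stmt8 (p q : ℕ → ℕ) (hpq : DeferredProperty p q) (x y : ℕ → E) (a b : E)
    (hx : DStatOrderConv p q x a) (hy : DStatOrderConv p q y b) :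
    DStatOrderConv p q (fun n => x n ⊓ y n) (a ⊓ b) := by
  obtain ⟨z, hz, Kx, -, hKx, hxz⟩ := hx
  obtain ⟨w, hw, Ky, -, hKy, hyw⟩ := hy
  have hK := hKx.inter_s8 hpq.1 hKy
  refine ⟨z + w, hz.add hpq hw, Kx ∩ Ky, hK.infinite hpq, hK, fun k hk => ?_⟩
  exact (abs_inf_sub_inf_le_abs_add_abs _ _ _ _).trans (add_le_add (hxz k hk.1) (hyw k hk.2))
end

section
/- Let E be a Riesz space and let p, q : ℕ → ℕ satisfy the deferred property. If x_n →^{D_{st_o}}_{p,q} x in E, then x_n⁺ →^{D_{st_o}}_{p,q} x⁺, x_n⁻ →^{D_{st_o}}_{p,q} x⁻, and |x_n| →^{D_{st_o}}_{p,q} |x|. -/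
open Filter Topology

variable {E : Type*} [AddCommGroup E] [Lattice E]
  [CovariantClass E E (· + ·) (· ≤ ·)] [Module ℝ E] [PosSMulMono ℝ E]

theorem stmt9 (p q : ℕ → ℕ) (hpq : DeferredProperty p q) (x : ℕ → E) (a : E)
    (hx : DStatOrderConv p q x a) :
    DStatOrderConv p q (fun n => (x n) ⊔ 0) (a ⊔ 0) ∧
      DStatOrderConv p q (fun n => (-(x n)) ⊔ 0) ((-a) ⊔ 0) ∧
      DStatOrderConv p q (fun n => |x n|) |a| := by
  obtain ⟨z, hz, K, hK, hKd, hb⟩ := hx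
  refine ⟨⟨z, hz, K, hK, hKd, fun k hk => ?_⟩, ⟨z, hz, K, hK, hKd, fun k hk => ?_⟩,
    ⟨z, hz, K, hK, hKd, fun k hk => ?_⟩⟩
  · exact le_trans (abs_sup_sub_sup_le_abs _ _ _) (hb k hk)
  · calc |(-x k) ⊔ 0 - (-a) ⊔ 0| ≤ |(-x k) - (-a)| := abs_sup_sub_sup_le_abs _ _ _
      _ = |x k - a| := by rw [← abs_neg]; congr 1; abel
      _ ≤ z k := hb k hk
  · simpa using le_trans (abs_abs_sub_abs_le (x k) a) (hb k hk)
end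

section
/- Let E be a Riesz space, let p, q : ℕ → ℕ satisfy the deferred property, and let (x_n) be a sequence in E with x ∈ E. Suppose there is a sequence (z_n) with z_n ↓^{D_{st_o}}_{p,q} 0 such that δ_{p,q}({n ∈ ℕ : |x_n − x| ≰ z_n}) = 0, and let K ⊆ ℕ be a set with liminf_{n→∞} |{k ∈ K : p_n < k ≤ q_n}|/(q_n − p_n) > 0. Then lim_{n→∞} |{k ∈ K : p_n < k ≤ q_n and |x_k − x| ≰ z_k}| / |{k ∈ K : p_n < k ≤ q_n}| = 0; that is, the subsequence (x_k)_{k∈K} deferred statistically order converges to x relative to K. -/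
open Filter Topology

variable {E : Type*} [AddCommGroup E] [Lattice E]
  [CovariantClass E E (· + ·) (· ≤ ·)] [Module ℝ E] [PosSMulMono ℝ E]

open Classical in
open Classical in
theorem stmt14 (p q : ℕ → ℕ) (hpq : DeferredProperty p q) (x : ℕ → E) (l : E)
    (z : ℕ → E) (hz : DStatDecreasing p q z)
    (hconv : DeferredDensity p q {n | ¬ |x n - l| ≤ z n} 0)
    (K : Set ℕ)
    (hK : 0 < atTop.liminf (fun n => deferredRatio p q K n)) :
    Tendsto (fun n =>
        (((Finset.Ioc (p n) (q n)).filter (fun k => k ∈ K ∧ ¬ |x k - l| ≤ z k)).card : ℝ) /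
          (((Finset.Ioc (p n) (q n)).filter (fun k => k ∈ K)).card : ℝ))
      atTop (nhds 0) := by
  obtain ⟨hlt, -⟩ := hpq
  set c := atTop.liminf (fun n => deferredRatio p q K n) with hc
  have hev : ∀ᶠ n in atTop, c / 2 < deferredRatio p q K n := by
    apply eventually_lt_of_lt_liminf
    · rw [← hc]; linarith
    · refine ⟨0, ?_⟩
      apply Filter.eventually_map.2
      filter_upwards with n
      have h1 := hlt n
      have : (p n : ℝ) ≤ (q n : ℝ) := by exact_mod_cast h1.le
      unfold deferredRatio
      exact div_nonneg (Nat.cast_nonneg _) (by linarith)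
  have h0 : Tendsto (fun n => (2 / c) * deferredRatio p q {n | ¬ |x n - l| ≤ z n} n)
      atTop (nhds 0) := by
    simpa using hconv.const_mul (2 / c)
  apply tendsto_of_tendsto_of_tendsto_of_le_of_le' tendsto_const_nhds h0
  · filter_upwards with n
    positivity
  · filter_upwards [hev] with n hn
    have hqp : (0 : ℝ) < (q n : ℝ) - (p n : ℝ) := by
      have := hlt n
      have : (p n : ℝ) < (q n : ℝ) := by exact_mod_cast this
      linarith
    set D : ℝ := (((Finset.Ioc (p n) (q n)).filter (fun k => k ∈ K)).card : ℝ) with hD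
    set B : ℝ := (((Finset.Ioc (p n) (q n)).filter
        (fun k => k ∈ {n | ¬ |x n - l| ≤ z n})).card : ℝ) with hB
    set N : ℝ := (((Finset.Ioc (p n) (q n)).filter
        (fun k => k ∈ K ∧ ¬ |x k - l| ≤ z k)).card : ℝ) with hN
    have hNB : N ≤ B := by
      have hsub : ((Finset.Ioc (p n) (q n)).filter (fun k => k ∈ K ∧ ¬ |x k - l| ≤ z k)) ⊆
          ((Finset.Ioc (p n) (q n)).filter (fun k => k ∈ {n | ¬ |x n - l| ≤ z n})) := by
        intro k hk
        simp only [Finset.mem_filter, Set.mem_setOf_eq] at *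
        exact ⟨hk.1, hk.2.2⟩
      rw [hN, hB]
      exact_mod_cast Finset.card_le_card hsub
    have hn' : c / 2 < D / ((q n : ℝ) - (p n : ℝ)) := hn
    have hcpos : 0 < c := hK
    have hDlb : c / 2 * ((q n : ℝ) - (p n : ℝ)) < D := by
      rwa [lt_div_iff₀ hqp] at hn'
    have hDpos : 0 < D := lt_of_le_of_lt (by positivity) hDlb
    have hN0 : 0 ≤ N := by positivity
    have h1 : N / D ≤ B / (c / 2 * ((q n : ℝ) - (p n : ℝ))) :=
      div_le_div₀ (le_trans hN0 hNB) hNB (by positivity) hDlb.le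
    have h2 : B / (c / 2 * ((q n : ℝ) - (p n : ℝ))) =
        2 / c * (B / ((q n : ℝ) - (p n : ℝ))) := by
      field_simp
    have h3 : deferredRatio p q {n | ¬ |x n - l| ≤ z n} n = B / ((q n : ℝ) - (p n : ℝ)) := by
      rw [hB]; unfold deferredRatio; congr 1
      norm_cast
      congr 1
      apply Finset.filter_congr_decidable
    calc N / D ≤ B / (c / 2 * ((q n : ℝ) - (p n : ℝ))) := h1
      _ = 2 / c * (B / ((q n : ℝ) - (p n : ℝ))) := h2
      _ = 2 / c * deferredRatio p q {n | ¬ |x n - l| ≤ z n} n := by rw [h3]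
end

section
/- Let E be a Riesz space and let p, q : ℕ → ℕ satisfy the deferred property such that the real sequence (p_n/(q_n − p_n)) is bounded. If a sequence (x_n) in E is statistical order convergent to x ∈ E, then x_n →^{D_{st_o}}_{p,q} x. -/
/-! A set of natural density one is the complement of a set `L` of natural density zero. Since
`(p n, q n] ⊆ [0, q n]`, the share of `L` in the window `(p n, q n]` is at most
`|L ∩ [0, q n]| / q n · q n / (q n - p n)`; the first factor tends to zero because `q n → ∞`,
and the second equals `1 + p n / (q n - p n)`, which is bounded. So `L` has deferred density zero
and the original set deferred density one: the regulator `z` and both index sets witnessing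
statistical order convergence also witness deferred statistical order convergence. -/

open Filter Topology

variable {E : Type*} [AddCommGroup E] [Lattice E]
  [CovariantClass E E (· + ·) (· ≤ ·)] [Module ℝ E] [PosSMulMono ℝ E]

open Classical in
/-- The natural density of `K ⊆ ℕ` is `a`. -/
def NatDensity (K : Set ℕ) (a : ℝ) : Prop :=
  Tendsto (fun n => (((Finset.Iic n).filter (fun k => k ∈ K)).card : ℝ) / (n : ℝ))
    atTop (nhds a)

/-- `z` is statistical order decreasing to `0`. -/
def StatDecreasing (z : ℕ → E) : Prop :=
  ∃ K : Set ℕ, K.Infinite ∧ NatDensity K 1 ∧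
    (∀ i ∈ K, ∀ j ∈ K, i ≤ j → z j ≤ z i) ∧ IsGLB (z '' K) 0

/-- `x` is statistical order convergent to `l`. -/
def StatOrderConv (x : ℕ → E) (l : E) : Prop :=
  ∃ z : ℕ → E, StatDecreasing z ∧
    ∃ K : Set ℕ, K.Infinite ∧ NatDensity K 1 ∧ ∀ k ∈ K, |x k - l| ≤ z k

open Classical in
noncomputable def natRatio (K : Set ℕ) (n : ℕ) : ℝ :=
  (((Finset.Iic n).filter (fun k => k ∈ K)).card : ℝ) / (n : ℝ)

lemma natDensity_iff_tendsto_natRatio {K : Set ℕ} {a : ℝ} :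
    NatDensity K a ↔ Tendsto (natRatio K) atTop (𝓝 a) :=
  Iff.rfl

lemma natRatio_nonneg (K : Set ℕ) (n : ℕ) : 0 ≤ natRatio K n := by
  unfold natRatio
  positivity

lemma card_filter_mem_add_card_filter_mem_compl {α : Type*} (s : Finset α) (K : Set α)
    [DecidablePred (· ∈ K)] [DecidablePred (· ∈ Kᶜ)] :
    ((s.filter (· ∈ K)).card : ℝ) + (s.filter (· ∈ Kᶜ)).card = s.card := by
  simp only [Set.mem_compl_iff]
  exact_mod_cast s.card_filter_add_card_filter_not (· ∈ K)

open Classical in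
lemma NatDensity.compl {K : Set ℕ} {a : ℝ} (h : NatDensity K a) : NatDensity Kᶜ (1 - a) := by
  have h_succ_div : Tendsto (fun n : ℕ => ((n : ℝ) + 1) / n) atTop (𝓝 1) := by
    simpa [add_comm] using tendsto_add_mul_div_add_mul_atTop_nhds (1 : ℝ) 0 1 one_ne_zero
  refine (h_succ_div.sub h).congr fun n => ?_
  have hcard := card_filter_mem_add_card_filter_mem_compl (Finset.Iic n) K
  rw [Nat.card_Iic, Nat.cast_add_one] at hcard
  rw [← sub_div, ← hcard, add_sub_cancel_left]
  -- the two filters differ only in their `Decidable` instances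
  congr

open Classical in
lemma deferredRatio_add_deferredRatio_compl {p q : ℕ → ℕ} {n : ℕ} (hlt : p n < q n)
    (K : Set ℕ) : deferredRatio p q K n + deferredRatio p q Kᶜ n = 1 := by
  have hne : (q n : ℝ) - p n ≠ 0 := sub_ne_zero.2 (by exact_mod_cast hlt.ne')
  unfold deferredRatio
  rw [← add_div, card_filter_mem_add_card_filter_mem_compl, Nat.card_Ioc,
    Nat.cast_sub hlt.le, div_self hne]

lemma DeferredDensity.of_compl {p q : ℕ → ℕ} (hlt : ∀ n, p n < q n) {K : Set ℕ} {a : ℝ}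
    (h : DeferredDensity p q Kᶜ (1 - a)) : DeferredDensity p q K a := by
  have h_one_sub := (tendsto_const_nhds (x := (1 : ℝ))).sub h
  rw [sub_sub_cancel] at h_one_sub
  refine h_one_sub.congr fun n => ?_
  rw [← deferredRatio_add_deferredRatio_compl (hlt n) K, add_sub_cancel_right]

open Classical in
lemma deferredRatio_le_natRatio_mul {p q : ℕ → ℕ} {n : ℕ} (hlt : p n < q n) (K : Set ℕ) :
    deferredRatio p q K n ≤ natRatio K (q n) * (1 + (p n : ℝ) / ((q n : ℝ) - p n)) := by
  have hlt' : (p n : ℝ) < q n := by exact_mod_cast hlt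
  have hq : (q n : ℝ) ≠ 0 := by linarith [(p n).cast_nonneg (α := ℝ)]
  have hne : (q n : ℝ) - p n ≠ 0 := by linarith
  have hcard : (((Finset.Ioc (p n) (q n)).filter (· ∈ K)).card : ℝ)
      ≤ ((Finset.Iic (q n)).filter (· ∈ K)).card := by
    exact_mod_cast Finset.card_le_card (Finset.filter_subset_filter _ Finset.Ioc_subset_Iic_self)
  calc deferredRatio p q K n
      ≤ (((Finset.Iic (q n)).filter (· ∈ K)).card : ℝ) / ((q n : ℝ) - p n) := by
        unfold deferredRatio
        gcongr
    _ = natRatio K (q n) * (1 + (p n : ℝ) / ((q n : ℝ) - p n)) := by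
        unfold natRatio
        field_simp
        ring

lemma DeferredDensity.zero_of_natDensity_zero {p q : ℕ → ℕ} (hpq : DeferredProperty p q)
    {C : ℝ} (hC : ∀ n, (p n : ℝ) / ((q n : ℝ) - p n) ≤ C) {K : Set ℕ} (h : NatDensity K 0) :
    DeferredDensity p q K 0 := by
  have h_upper : Tendsto (fun n => natRatio K (q n) * (1 + C)) atTop (𝓝 0) := by
    simpa using ((natDensity_iff_tendsto_natRatio.1 h).comp hpq.2).mul_const (1 + C)
  refine squeeze_zero (fun n => ?_) (fun n => ?_) h_upper
  · unfold deferredRatio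
    exact div_nonneg (Nat.cast_nonneg _) (sub_nonneg.2 (by exact_mod_cast (hpq.1 n).le))
  · exact (deferredRatio_le_natRatio_mul (hpq.1 n) K).trans
      (mul_le_mul_of_nonneg_left (by linarith [hC n]) (natRatio_nonneg K _))

lemma DeferredDensity.one_of_natDensity_one {p q : ℕ → ℕ} (hpq : DeferredProperty p q)
    {C : ℝ} (hC : ∀ n, (p n : ℝ) / ((q n : ℝ) - p n) ≤ C) {K : Set ℕ} (h : NatDensity K 1) :
    DeferredDensity p q K 1 := by
  have h_compl := h.compl
  rw [sub_self] at h_compl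
  refine DeferredDensity.of_compl hpq.1 ?_
  rw [sub_self]
  exact DeferredDensity.zero_of_natDensity_zero hpq hC h_compl

theorem stmt15 (p q : ℕ → ℕ) (hpq : DeferredProperty p q)
    (hbdd : ∃ C : ℝ, ∀ n, (p n : ℝ) / ((q n : ℝ) - (p n : ℝ)) ≤ C)
    (x : ℕ → E) (l : E) (hx : StatOrderConv x l) :
    DStatOrderConv p q x l := by
  obtain ⟨C, hC⟩ := hbdd
  obtain ⟨z, ⟨K, hK_inf, hK, hz_anti, hz_glb⟩, K', hK'_inf, hK', hx_le⟩ := hx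
  exact ⟨z, ⟨K, hK_inf, .one_of_natDensity_one hpq hC hK, hz_anti, hz_glb⟩,
    K', hK'_inf, .one_of_natDensity_one hpq hC hK', hx_le⟩
end

section
/- Let E be a Riesz space and let p, q : ℕ → ℕ satisfy the deferred property. If a sequence (x_n) in E order converges to x ∈ E, then x_n →^{D_{st_o}}_{p,q} x; in particular every order convergent sequence is deferred statistical order convergent to its order limit. -/
open Filter Topology

variable {E : Type*} [AddCommGroup E] [Lattice E]
  [CovariantClass E E (· + ·) (· ≤ ·)] [Module ℝ E] [PosSMulMono ℝ E]

/-- `x` order converges to `l`. -/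
def OrderConv (x : ℕ → E) (l : E) : Prop :=
  ∃ y : ℕ → E, (∀ m n, m ≤ n → y n ≤ y m) ∧ IsGLB (Set.range y) 0 ∧ ∀ n, |x n - l| ≤ y n

lemma deferredDensity_univ (p q : ℕ → ℕ) (hpq : DeferredProperty p q) :
    DeferredDensity p q Set.univ 1 := by
  have : deferredRatio p q Set.univ = fun _ => (1 : ℝ) := by
    funext n
    have h := hpq.1 n
    simp only [deferredRatio, Set.mem_univ, Finset.filter_true_of_mem (fun _ _ => trivial),
      Nat.card_Ioc]
    rw [Nat.cast_sub h.le]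
    have : (q n : ℝ) - (p n : ℝ) ≠ 0 := by
      have : (p n : ℝ) < q n := by exact_mod_cast h
      linarith
    field_simp
  rw [DeferredDensity, this]
  exact tendsto_const_nhds

theorem stmt17 (p q : ℕ → ℕ) (hpq : DeferredProperty p q) (x : ℕ → E) (l : E)
    (hx : OrderConv x l) : DStatOrderConv p q x l := by
  obtain ⟨y, hdec, hglb, hbd⟩ := hx
  refine ⟨y, ⟨Set.univ, Set.infinite_univ, deferredDensity_univ p q hpq,
    fun i _ j _ hij => hdec i j hij, by rwa [Set.image_univ]⟩,
    Set.univ, Set.infinite_univ, deferredDensity_univ p q hpq, fun k _ => hbd k⟩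
end
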